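/- With the same setup, Cov(Y_k, Y_ℓ) = γ_k(−A_k)^{−2}D_k(−A_{k+1})^{−1}D_{k+1} ⋯ (−A_{ℓ−1})^{−1}D_{ℓ−1}(−A_ℓ)^{−1}𝟏 − (γ_k(−A_k)^{−1}𝟏)(γ_ℓ(−A_ℓ)^{−1}𝟏) for 1 ≤ k < ℓ ≤ n. -/

import Mathlib

open Matrix MeasureTheory Filter

/-- Iterated left-multiplication of a row vector by a chain of (rectangular) step
matrices `M 0, M 1, …`, yielding a row vector at every intermediate position. -/
noncomputable def chainRow {n : ℕ} (d : Fin (n + 1) → ℕ)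
    (M : (k : Fin n) → Matrix (Fin (d k.castSucc)) (Fin (d k.succ)) ℝ)
    (v0 : Fin (d 0) → ℝ) : (k : Fin (n + 1)) → Fin (d k) → ℝ :=
  Fin.induction v0 (fun k ih => ih ᵥ* M k)

/-!
Expanding the chain product `α e^{y₁A₁}D₁ ⋯ e^{yₙAₙ}Dₙ 𝟏` as a sum over paths of states turns the
density into a finite sum of products of functions of the separate coordinates, so by Fubini a
mixed moment `E[∏_{m ∈ s} Y_m]` is the same chain product with `e^{yA_m}` replaced by
`∫₀^∞ t^e e^{tA_m} dt = (-A_m)^{-(e+1)}`, where `e = 1` for `m ∈ s` and `e = 0` otherwise. These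
integrals converge because `e^{tA} → 0` forces exponential decay through the semigroup law. Finally
`(-A_m)⁻¹ D_m 𝟏 = 𝟏` collapses all factors after the last index of `s`.
-/

open NormedSpace Set Topology

section ChainRow

variable {n : ℕ}

@[simp]
theorem chainRow_succ (d : Fin (n + 1) → ℕ)
    (M : (k : Fin n) → Matrix (Fin (d k.castSucc)) (Fin (d k.succ)) ℝ) (v0 : Fin (d 0) → ℝ)
    (p : Fin n) : chainRow d M v0 p.succ = chainRow d M v0 p.castSucc ᵥ* M p := by
  simp [chainRow]

theorem chainRow_congr (d : Fin (n + 1) → ℕ)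
    {M M' : (k : Fin n) → Matrix (Fin (d k.castSucc)) (Fin (d k.succ)) ℝ} (v0 : Fin (d 0) → ℝ)
    {p : Fin (n + 1)} (h : ∀ m : Fin n, m.castSucc < p → M m = M' m) :
    chainRow d M v0 p = chainRow d M' v0 p := by
  induction p using Fin.induction with
  | zero => rfl
  | succ p ih =>
    rw [chainRow_succ, chainRow_succ, ih fun m hm => h m (hm.trans p.castSucc_lt_succ),
      h p p.castSucc_lt_succ]

theorem chainRow_succ_eq_chainRow_tail (d : Fin (n + 2) → ℕ)
    (M : (k : Fin (n + 1)) → Matrix (Fin (d k.castSucc)) (Fin (d k.succ)) ℝ)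
    (v0 : Fin (d 0) → ℝ) (p : Fin (n + 1)) :
    chainRow d M v0 p.succ = chainRow (fun m => d m.succ) (fun m => M m.succ) (v0 ᵥ* M 0) p := by
  induction p using Fin.induction with
  | zero => rw [chainRow_succ]; rfl
  | succ p ih => rw [chainRow_succ, chainRow_succ, ← ih]; rfl

theorem chainRow_last_dotProduct (d : Fin (n + 1) → ℕ)
    (M : (k : Fin n) → Matrix (Fin (d k.castSucc)) (Fin (d k.succ)) ℝ) (v0 : Fin (d 0) → ℝ)
    (w : Fin (d (Fin.last n)) → ℝ) :
    chainRow d M v0 (Fin.last n) ⬝ᵥ w =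
      ∑ i : (m : Fin (n + 1)) → Fin (d m),
        v0 (i 0) * (∏ m : Fin n, M m (i m.castSucc) (i m.succ)) * w (i (Fin.last n)) := by
  induction n with
  | zero =>
    rw [← (Equiv.piUnique fun m : Fin 1 => Fin (d m)).symm.sum_comp]
    simp only [dotProduct, Fin.default_eq_zero, Equiv.piUnique_symm_apply, Finset.univ_eq_empty,
      Finset.prod_empty, mul_one]
    rfl
  | succ n ih =>
    have hstep : chainRow d M v0 (Fin.last (n + 1)) = chainRow (fun m => d m.succ)
        (fun m => M m.succ) (v0 ᵥ* M 0) (Fin.last n) :=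
      chainRow_succ_eq_chainRow_tail d M v0 (Fin.last n)
    rw [hstep, ih,
      ← (Fin.consEquiv fun m : Fin (n + 2) => Fin (d m)).sum_comp, Fintype.sum_prod_type]
    simp only [Fin.consEquiv_apply, Fin.prod_univ_succ, Fin.cons_zero, Fin.cons_succ]
    rw [Finset.sum_comm]
    refine Finset.sum_congr rfl fun i _ => ?_
    simp only [vecMul, dotProduct, Finset.sum_mul]
    refine Finset.sum_congr rfl fun j _ => ?_
    change _ = v0 j * (M 0 j (i 0) * ∏ m : Fin n, M m.succ (i m.castSucc) (i m.succ)) *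
      w (i (Fin.last n))
    ring

theorem chainRow_smul_last_dotProduct (d : Fin (n + 1) → ℕ)
    (M : (k : Fin n) → Matrix (Fin (d k.castSucc)) (Fin (d k.succ)) ℝ) (c : Fin n → ℝ)
    (v0 : Fin (d 0) → ℝ) (w : Fin (d (Fin.last n)) → ℝ) :
    chainRow d (fun m => c m • M m) v0 (Fin.last n) ⬝ᵥ w =
      (∏ m, c m) * (chainRow d M v0 (Fin.last n) ⬝ᵥ w) := by
  simp only [chainRow_last_dotProduct, Finset.mul_sum, Matrix.smul_apply, smul_eq_mul,
    Finset.prod_mul_distrib]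
  exact Finset.sum_congr rfl fun i _ => by ring

theorem chainRow_last_dotProduct_one_of_mulVec_one (d : Fin (n + 1) → ℕ)
    {M : (k : Fin n) → Matrix (Fin (d k.castSucc)) (Fin (d k.succ)) ℝ} (v0 : Fin (d 0) → ℝ)
    {p : Fin (n + 1)} (h : ∀ m : Fin n, p ≤ m.castSucc → M m *ᵥ (fun _ => 1) = fun _ => 1) :
    chainRow d M v0 (Fin.last n) ⬝ᵥ (fun _ => 1) = chainRow d M v0 p ⬝ᵥ (fun _ => 1) := by
  induction p using Fin.reverseInduction with
  | last => rfl
  | cast m ih =>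
    rw [ih fun m' hm' => h m' (m.castSucc_lt_succ.le.trans hm'), chainRow_succ,
      ← dotProduct_mulVec, h m le_rfl]

theorem integral_chainRow_last_dotProduct (d : Fin (n + 1) → ℕ) {X : Fin n → Type*}
    [∀ m, MeasurableSpace (X m)] (μ : (m : Fin n) → Measure (X m)) [∀ m, SigmaFinite (μ m)]
    {F : (m : Fin n) → X m → Matrix (Fin (d m.castSucc)) (Fin (d m.succ)) ℝ}
    {N : (m : Fin n) → Matrix (Fin (d m.castSucc)) (Fin (d m.succ)) ℝ}
    (hF : ∀ m i j, Integrable (fun x => F m x i j) (μ m))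
    (hN : ∀ m i j, ∫ x, F m x i j ∂μ m = N m i j) (v0 : Fin (d 0) → ℝ)
    (w : Fin (d (Fin.last n)) → ℝ) :
    ∫ x, chainRow d (fun m => F m (x m)) v0 (Fin.last n) ⬝ᵥ w ∂Measure.pi μ =
      chainRow d N v0 (Fin.last n) ⬝ᵥ w := by
  simp only [chainRow_last_dotProduct]
  rw [integral_finsetSum _ fun i _ =>
    ((Integrable.fintype_prod_dep fun m => hF m _ _).const_mul _).mul_const _]
  refine Finset.sum_congr rfl fun i _ => ?_
  rw [integral_mul_const, integral_const_mul,
    integral_fintype_prod_eq_prod (fun m x => F m x (i m.castSucc) (i m.succ))]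
  simp only [hN]

end ChainRow

section ExpDecay

variable {𝔸 : Type*} [NormedRing 𝔸] [NormedAlgebra ℝ 𝔸] [CompleteSpace 𝔸]

theorem continuous_exp_smul (B : 𝔸) : Continuous (fun t : ℝ => exp (t • B)) :=
  (differentiable_exp_smul_const ℝ B).continuous

theorem exp_add_natCast_mul_smul (B : 𝔸) (r T : ℝ) (k : ℕ) :
    exp ((r + k * T) • B) = exp (r • B) * exp (T • B) ^ k := by
  let _ : NormedAlgebra ℚ 𝔸 := NormedAlgebra.restrictScalars ℚ ℝ 𝔸
  rw [add_smul, NormedSpace.exp_add_of_commute ((Commute.refl B).smul_left _ |>.smul_right _),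
    mul_smul, Nat.cast_smul_eq_nsmul, NormedSpace.exp_nsmul]

/-- Once `‖exp (T • B)‖ ≤ 1/2`, the semigroup law halves the norm on every period of length `T`,
which is exponential decay. -/
theorem exists_norm_exp_smul_le_of_tendsto (B : 𝔸)
    (h : Tendsto (fun t : ℝ => exp (t • B)) atTop (𝓝 0)) :
    ∃ c > 0, ∃ C, ∀ t : ℝ, 0 ≤ t → ‖exp (t • B)‖ ≤ C * Real.exp (-c * t) := by
  obtain ⟨T, hT1, hThalf⟩ : ∃ T : ℝ, 1 ≤ T ∧ ‖exp (T • B)‖ ≤ 1 / 2 :=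
    ((eventually_ge_atTop 1).and
      (h.norm.eventually_le_const (by norm_num : ‖(0 : 𝔸)‖ < 1 / 2))).exists
  have hT : 0 < T := by linarith
  obtain ⟨C, hC⟩ := (isCompact_Icc (a := 0) (b := T)).exists_bound_of_continuousOn
    (continuous_exp_smul B).continuousOn
  refine ⟨Real.log 2 / T, by positivity, 2 * C, fun t ht => ?_⟩
  set k := ⌊t / T⌋₊
  have hkt : k * T ≤ t := (le_div_iff₀ hT).mp (Nat.floor_le (by positivity))
  have htk : t < (k + 1) * T := (div_lt_iff₀ hT).mp (Nat.lt_floor_add_one _)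
  have hr : ‖exp ((t - k * T) • B)‖ ≤ C := hC _ ⟨by linarith, by linarith⟩
  have hgeom : ‖exp (t • B)‖ ≤ C * (1 / 2) ^ k := by
    rcases k.eq_zero_or_pos with hk | hk
    · simpa [hk] using hr
    rw [show t = (t - k * T) + k * T by ring, exp_add_natCast_mul_smul]
    calc ‖exp ((t - k * T) • B) * exp (T • B) ^ k‖
        ≤ ‖exp ((t - k * T) • B)‖ * ‖exp (T • B)‖ ^ k :=
          (norm_mul_le _ _).trans (mul_le_mul_of_nonneg_left (norm_pow_le' _ hk) (norm_nonneg _))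
      _ ≤ C * (1 / 2) ^ k := by gcongr; exact (norm_nonneg _).trans hr
  have hC0 : 0 ≤ C := (norm_nonneg _).trans hr
  have hpow : ((1 : ℝ) / 2) ^ k ≤ 2 * Real.exp (-(Real.log 2 / T) * t) := by
    have hkT : Real.log 2 / T * t ≤ Real.log 2 * (k + 1) :=
      calc Real.log 2 / T * t ≤ Real.log 2 / T * ((k + 1) * T) := by gcongr
        _ = Real.log 2 * (k + 1) := by field_simp
    calc ((1 : ℝ) / 2) ^ k = Real.exp (-(Real.log 2 * k)) := by
          rw [Real.exp_neg, ← Real.rpow_def_of_pos two_pos, Real.rpow_natCast, one_div, inv_pow]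
      _ ≤ Real.exp (Real.log 2 + -(Real.log 2 / T) * t) := by
          gcongr
          linarith
      _ = 2 * Real.exp (-(Real.log 2 / T) * t) := by rw [Real.exp_add, Real.exp_log two_pos]
  calc ‖exp (t • B)‖ ≤ C * (1 / 2) ^ k := hgeom
    _ ≤ C * (2 * Real.exp (-(Real.log 2 / T) * t)) := by gcongr
    _ = 2 * C * Real.exp (-(Real.log 2 / T) * t) := by ring

theorem integrableOn_pow_smul_exp_smul_Ioi (B : 𝔸)
    (h : Tendsto (fun t : ℝ => exp (t • B)) atTop (𝓝 0)) (e : ℕ) :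
    IntegrableOn (fun t : ℝ => t ^ e • exp (t • B)) (Ioi 0) := by
  obtain ⟨c, hc, C, hC⟩ := exists_norm_exp_smul_le_of_tendsto B h
  have hdom : IntegrableOn (fun t : ℝ => C * (t ^ (e : ℝ) * Real.exp (-c * t ^ (1 : ℝ))))
      (Ioi 0) :=
    (integrableOn_rpow_mul_exp_neg_mul_rpow (neg_one_lt_zero.trans_le e.cast_nonneg) one_pos
      hc).const_mul C
  refine hdom.mono'
    ((continuous_pow e).smul (continuous_exp_smul B)).aestronglyMeasurable.restrict ?_
  filter_upwards [ae_restrict_mem measurableSet_Ioi] with t (ht : 0 < t)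
  rw [norm_smul, norm_pow, Real.norm_of_nonneg ht.le, Real.rpow_natCast, Real.rpow_one]
  calc t ^ e * ‖exp (t • B)‖ ≤ t ^ e * (C * Real.exp (-c * t)) := by gcongr; exact hC t ht.le
    _ = C * (t ^ e * Real.exp (-c * t)) := by ring

theorem tendsto_smul_exp_smul_atTop (B : 𝔸)
    (h : Tendsto (fun t : ℝ => exp (t • B)) atTop (𝓝 0)) :
    Tendsto (fun t : ℝ => t • exp (t • B)) atTop (𝓝 0) := by
  obtain ⟨c, hc, C, hC⟩ := exists_norm_exp_smul_le_of_tendsto B h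
  have hlim : Tendsto (fun t : ℝ => C * (t * Real.exp (-c * t))) atTop (𝓝 0) := by
    simpa using (tendsto_rpow_mul_exp_neg_mul_atTop_nhds_zero 1 c hc).const_mul C
  refine squeeze_zero_norm' ?_ hlim
  filter_upwards [eventually_ge_atTop 0] with t ht
  rw [norm_smul, Real.norm_of_nonneg ht]
  calc t * ‖exp (t • B)‖ ≤ t * (C * Real.exp (-c * t)) := by gcongr; exact hC t ht
    _ = C * (t * Real.exp (-c * t)) := by ring

variable {B B' : 𝔸}

theorem integral_exp_smul_Ioi (hB : -B * B' = 1)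
    (h : Tendsto (fun t : ℝ => exp (t • B)) atTop (𝓝 0)) :
    ∫ t in Ioi (0 : ℝ), exp (t • B) = B' := by
  have hderiv : ∀ t : ℝ, HasDerivAt (fun u : ℝ => -(exp (u • B) * B')) (exp (t • B)) t :=
    fun t => ((hasDerivAt_exp_smul_const B t).mul_const B').neg.congr_deriv (by
      rw [mul_assoc, ← mul_neg, ← neg_mul, hB, mul_one])
  rw [integral_Ioi_of_hasDerivAt_of_tendsto (hderiv 0).continuousAt.continuousWithinAt
    (fun t _ => hderiv t) (by simpa using integrableOn_pow_smul_exp_smul_Ioi B h 0)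
    (by simpa using (h.mul_const B').neg)]
  simp

theorem integral_smul_exp_smul_Ioi (hB : -B * B' = 1)
    (h : Tendsto (fun t : ℝ => exp (t • B)) atTop (𝓝 0)) :
    ∫ t in Ioi (0 : ℝ), t • exp (t • B) = B' ^ 2 := by
  have hderiv : ∀ t : ℝ, HasDerivAt (fun u : ℝ => -(u • exp (u • B) * B') - exp (u • B) * B' ^ 2)
      (t • exp (t • B)) t := fun t => by
    have hexp := hasDerivAt_exp_smul_const B t
    refine ((((hasDerivAt_id t).smul hexp).mul_const B').neg.sub
      (hexp.mul_const (B' ^ 2))).congr_deriv ?_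
    have hB' : B * B' = -1 := by rw [← neg_neg (B * B'), ← neg_mul, hB]
    simp only [id, one_smul, add_mul, smul_mul_assoc, mul_assoc, sq, ← mul_assoc B B', hB',
      neg_one_mul, mul_neg, mul_one, smul_neg]
    abel
  rw [integral_Ioi_of_hasDerivAt_of_tendsto (hderiv 0).continuousAt.continuousWithinAt
    (fun t _ => hderiv t) (by simpa using integrableOn_pow_smul_exp_smul_Ioi B h 1)
    (by simpa using
      ((tendsto_smul_exp_smul_atTop B h).mul_const B').neg.sub (h.mul_const (B' ^ 2)))]
  simp

end ExpDecay

section MatrixEntries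

variable {ι κ : Type*} [Fintype ι] [DecidableEq ι]

/-- Mathlib's `L∞`-operator norm on square matrices, with its uniform structure replaced by the
entrywise one of `Matrix ι ι ℝ` (equal, but not reducibly defeq), so that `NormedSpace.exp`, limits
and integrals for this normed ring are syntactically the usual ones on matrices. -/
noncomputable abbrev Matrix.linftyOpNormedRingEntrywise : NormedRing (Matrix ι ι ℝ) :=
  { Matrix.linftyOpNormedRing with toUniformSpace := inferInstance, toRing := Matrix.instRing }

attribute [local instance] Matrix.linftyOpNormedRingEntrywise

noncomputable abbrev Matrix.linftyOpNormedAlgebraEntrywise : NormedAlgebra ℝ (Matrix ι ι ℝ) :=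
  { Matrix.linftyOpNormedAlgebra with toAlgebra := Matrix.instAlgebra }

attribute [local instance] Matrix.linftyOpNormedAlgebraEntrywise

theorem Matrix.integrable_and_integral_mul_apply {X : Type*} [MeasurableSpace X] {μ : Measure X}
    {f : X → Matrix ι ι ℝ} (hf : Integrable f μ) (D : Matrix ι κ ℝ) (i : ι) (j : κ) :
    Integrable (fun x => (f x * D) i j) μ ∧ ∫ x, (f x * D) i j ∂μ = ((∫ x, f x ∂μ) * D) i j := by
  let L : Matrix ι ι ℝ →L[ℝ] ℝ := LinearMap.toContinuousLinearMap
    { toFun := fun M => (M * D) i j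
      map_add' := fun M M' => by simp [Matrix.add_mul]
      map_smul' := fun c M => by simp [Matrix.smul_mul] }
  exact ⟨L.integrable_comp hf, L.integral_comp_comm hf⟩

variable {A : Matrix ι ι ℝ} (hA : IsUnit A.det)
    (hdecay : Tendsto (fun t : ℝ => exp (t • A)) atTop (𝓝 0))
include hA hdecay

theorem Matrix.integrableOn_and_integral_exp_smul_mul_apply (D : Matrix ι κ ℝ) (i : ι) (j : κ) :
    IntegrableOn (fun t : ℝ => (exp (t • A) * D) i j) (Ioi 0) ∧
      ∫ t in Ioi (0 : ℝ), (exp (t • A) * D) i j = ((-A)⁻¹ * D) i j := by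
  have hinv : -A * (-A)⁻¹ = 1 := Matrix.mul_nonsing_inv _ (by simpa [Matrix.det_neg] using hA)
  rw [← integral_exp_smul_Ioi hinv hdecay]
  exact Matrix.integrable_and_integral_mul_apply
    (by simpa [IntegrableOn] using integrableOn_pow_smul_exp_smul_Ioi A hdecay 0) D i j

theorem Matrix.integrableOn_and_integral_mul_exp_smul_mul_apply (D : Matrix ι κ ℝ) (i : ι) (j : κ) :
    IntegrableOn (fun t : ℝ => t * (exp (t • A) * D) i j) (Ioi 0) ∧
      ∫ t in Ioi (0 : ℝ), t * (exp (t • A) * D) i j = ((-A)⁻¹ ^ 2 * D : Matrix ι κ ℝ) i j := by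
  have hinv : -A * (-A)⁻¹ = 1 := Matrix.mul_nonsing_inv _ (by simpa [Matrix.det_neg] using hA)
  have := Matrix.integrable_and_integral_mul_apply
    (by simpa [IntegrableOn] using integrableOn_pow_smul_exp_smul_Ioi A hdecay 1) D i j
  simp only [Matrix.smul_mul, Matrix.smul_apply, smul_eq_mul] at this
  rwa [integral_smul_exp_smul_Ioi hinv hdecay] at this

end MatrixEntries

section PhaseType

theorem Matrix.inv_neg_pow_succ_mul_mulVec_one {ι κ : Type*} [Fintype ι] [DecidableEq ι]
    [Fintype κ] {A : Matrix ι ι ℝ} {D : Matrix ι κ ℝ} (hA : IsUnit A.det)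
    (hD : D *ᵥ (fun _ => 1) = -(A *ᵥ (fun _ => 1))) (e : ℕ) :
    ((-A)⁻¹ ^ (e + 1) * D) *ᵥ (fun _ => 1) = (-A)⁻¹ ^ e *ᵥ (fun _ => 1) := by
  rw [← mulVec_mulVec, hD, ← neg_mulVec, mulVec_mulVec, pow_succ, Matrix.mul_assoc,
    Matrix.nonsing_inv_mul _ (by simpa [Matrix.det_neg] using hA), Matrix.mul_one]

variable {n : ℕ} {d : Fin (n + 2) → ℕ}
  {A : (k : Fin (n + 1)) → Matrix (Fin (d k.castSucc)) (Fin (d k.castSucc)) ℝ}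
  {D : (k : Fin (n + 1)) → Matrix (Fin (d k.castSucc)) (Fin (d k.succ)) ℝ}

theorem integral_prod_mul_chainRow_exp (hA : ∀ k, IsUnit (A k).det)
    (hdecay : ∀ k, Tendsto (fun t : ℝ => exp (t • A k)) atTop (𝓝 0))
    (α : Fin (d 0) → ℝ) (s : Finset (Fin (n + 1))) :
    ∫ y in univ.pi (fun _ : Fin (n + 1) => Ioi (0 : ℝ)),
        (∏ m ∈ s, y m) *
          (chainRow d (fun m => exp (y m • A m) * D m) α (Fin.last (n + 1)) ⬝ᵥ fun _ => 1) =
      chainRow d (fun m => (-(A m))⁻¹ ^ (if m ∈ s then 2 else 1) * D m) α (Fin.last (n + 1)) ⬝ᵥ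
        fun _ => 1 := by
  have hweight : ∀ y : Fin (n + 1) → ℝ, (∏ m ∈ s, y m) *
      (chainRow d (fun m => exp (y m • A m) * D m) α (Fin.last (n + 1)) ⬝ᵥ fun _ => 1) =
      chainRow d (fun m => (if m ∈ s then y m else 1) • (exp (y m • A m) * D m)) α
        (Fin.last (n + 1)) ⬝ᵥ fun _ => 1 := fun y => by
    rw [chainRow_smul_last_dotProduct, Finset.prod_ite_mem, Finset.univ_inter]
  simp_rw [hweight]
  rw [volume_pi, Measure.restrict_pi_pi]
  have hcoord : ∀ m i j,
      IntegrableOn (fun t => ((if m ∈ s then t else 1) • (exp (t • A m) * D m)) i j)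
          (Ioi (0 : ℝ)) ∧
        ∫ t in Ioi (0 : ℝ), ((if m ∈ s then t else 1) • (exp (t • A m) * D m)) i j =
          ((-(A m))⁻¹ ^ (if m ∈ s then 2 else 1) * D m :
            Matrix (Fin (d m.castSucc)) (Fin (d m.succ)) ℝ) i j := fun m i j => by
    by_cases hm : m ∈ s
    · simpa [hm] using
        Matrix.integrableOn_and_integral_mul_exp_smul_mul_apply (hA m) (hdecay m) (D m) i j
    · simpa [hm] using
        Matrix.integrableOn_and_integral_exp_smul_mul_apply (hA m) (hdecay m) (D m) i j
  exact integral_chainRow_last_dotProduct d _ (fun m i j => (hcoord m i j).1)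
    (fun m i j => (hcoord m i j).2) α _

theorem chainRow_inv_pow_mul_last_dotProduct_one (hA : ∀ k, IsUnit (A k).det)
    (hD : ∀ k, D k *ᵥ (fun _ => 1) = -(A k *ᵥ (fun _ => 1))) (α : Fin (d 0) → ℝ)
    {s : Finset (Fin (n + 1))} {p : Fin (n + 1)} (hp : p ∈ s) (hs : ∀ m ∈ s, m ≤ p) :
    chainRow d (fun m => (-(A m))⁻¹ ^ (if m ∈ s then 2 else 1) * D m) α (Fin.last (n + 1)) ⬝ᵥ
        (fun _ => 1) =
      chainRow d (fun m => (-(A m))⁻¹ ^ (if m ∈ s.erase p then 2 else 1) * D m) α p.castSucc ⬝ᵥ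
        ((-(A p))⁻¹ *ᵥ fun _ => 1) := by
  have hstep := fun m => Matrix.inv_neg_pow_succ_mul_mulVec_one (hA m) (hD m)
  rw [chainRow_last_dotProduct_one_of_mulVec_one d α (p := p.succ) fun m hm => ?_, chainRow_succ,
    ← dotProduct_mulVec, if_pos hp, hstep p 1, pow_one]
  · refine congrArg (· ⬝ᵥ _) (chainRow_congr d α fun m hm => ?_)
    simp [(Fin.castSucc_lt_castSucc_iff.mp hm).ne]
  · have hms : m ∉ s := fun h => not_lt.mpr (hs m h) (Fin.succ_le_castSucc_iff.mp hm)
    rw [if_neg hms, hstep m 0, pow_zero, one_mulVec]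

end PhaseType

theorem stmt_6_general (n : ℕ) (d : Fin (n + 2) → ℕ)
    (A : (k : Fin (n + 1)) → Matrix (Fin (d k.castSucc)) (Fin (d k.castSucc)) ℝ)
    (D : (k : Fin (n + 1)) → Matrix (Fin (d k.castSucc)) (Fin (d k.succ)) ℝ)
    (α : Fin (d 0) → ℝ)
    (hAinv : ∀ k, IsUnit (A k).det)
    (hAdecay : ∀ k, ∀ i j, Tendsto (fun t : ℝ => (NormedSpace.exp (t • A k)) i j) atTop (nhds 0))
    (hD : ∀ k, D k *ᵥ (fun _ => (1 : ℝ)) = -(A k *ᵥ (fun _ => (1 : ℝ))))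
    (k ℓ : Fin (n + 1)) (hkl : k < ℓ) :
    (∫ y in Set.univ.pi (fun _ : Fin (n + 1) => Set.Ioi (0 : ℝ)),
        y k * y ℓ *
          ((chainRow d (fun m => NormedSpace.exp (y m • A m) * D m) α (Fin.last (n + 1))) ⬝ᵥ
            (fun _ => (1 : ℝ))))
      - (∫ y in Set.univ.pi (fun _ : Fin (n + 1) => Set.Ioi (0 : ℝ)),
          y k *
            ((chainRow d (fun m => NormedSpace.exp (y m • A m) * D m) α (Fin.last (n + 1))) ⬝ᵥ
              (fun _ => (1 : ℝ)))) *
        (∫ y in Set.univ.pi (fun _ : Fin (n + 1) => Set.Ioi (0 : ℝ)),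
          y ℓ *
            ((chainRow d (fun m => NormedSpace.exp (y m • A m) * D m) α (Fin.last (n + 1))) ⬝ᵥ
              (fun _ => (1 : ℝ))))
      = (chainRow d (fun m => ((-(A m))⁻¹) ^ (if m = k then 2 else 1) * D m) α ℓ.castSucc) ⬝ᵥ
          ((-(A ℓ))⁻¹ *ᵥ (fun _ => (1 : ℝ)))
        - ((chainRow d (fun m => (-(A m))⁻¹ * D m) α k.castSucc) ⬝ᵥ
            ((-(A k))⁻¹ *ᵥ (fun _ => (1 : ℝ)))) *
          ((chainRow d (fun m => (-(A m))⁻¹ * D m) α ℓ.castSucc) ⬝ᵥ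
            ((-(A ℓ))⁻¹ *ᵥ (fun _ => (1 : ℝ)))) := by
  have hdecay : ∀ m, Tendsto (fun t : ℝ => NormedSpace.exp (t • A m)) atTop (𝓝 0) :=
    fun m => tendsto_pi_nhds.2 fun i => tendsto_pi_nhds.2 (hAdecay m i)
  have hkℓ := integral_prod_mul_chainRow_exp (D := D) hAinv hdecay α {k, ℓ}
  have hk := integral_prod_mul_chainRow_exp (D := D) hAinv hdecay α {k}
  have hℓ := integral_prod_mul_chainRow_exp (D := D) hAinv hdecay α {ℓ}
  simp only [Finset.prod_pair hkl.ne, Finset.prod_singleton] at hkℓ hk hℓ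
  rw [hkℓ, hk, hℓ,
    chainRow_inv_pow_mul_last_dotProduct_one hAinv hD α (p := ℓ) (by simp) (by simp [hkl.le]),
    chainRow_inv_pow_mul_last_dotProduct_one hAinv hD α (Finset.mem_singleton_self k) (by simp),
    chainRow_inv_pow_mul_last_dotProduct_one hAinv hD α (Finset.mem_singleton_self ℓ) (by simp),
    Finset.erase_insert_of_ne hkl.ne, Finset.erase_singleton, Finset.erase_singleton,
    insert_empty_eq]
  simp only [Finset.mem_singleton, Finset.notMem_empty, if_false, pow_one]

/-- Covariance formula for a sequential multivariate phase-type vector: for `k < ℓ`,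
`Cov(Y_k,Y_ℓ) = γ_k (−A_k)^{−2} D_k (−A_{k+1})^{−1} D_{k+1} ⋯ (−A_{ℓ−1})^{−1} D_{ℓ−1}
(−A_ℓ)^{−1} 𝟏 − (γ_k (−A_k)^{−1} 𝟏)(γ_ℓ (−A_ℓ)^{−1} 𝟏)`.  Here `Cov(Y_k,Y_ℓ)` is
`E[Y_k Y_ℓ] − E[Y_k] E[Y_ℓ]` expressed via integrals of the joint density, and
`γ_j = α (−A₁)^{−1} D₁ ⋯ (−A_{j−1})^{−1} D_{j−1}`. -/
theorem stmt_6 (n : ℕ) (d : Fin (n + 2) → ℕ)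
    (A : (k : Fin (n + 1)) → Matrix (Fin (d k.castSucc)) (Fin (d k.castSucc)) ℝ)
    (D : (k : Fin (n + 1)) → Matrix (Fin (d k.castSucc)) (Fin (d k.succ)) ℝ)
    (α : Fin (d 0) → ℝ)
    (hα : ∀ i, 0 ≤ α i) (hα1 : α ⬝ᵥ (fun _ => (1 : ℝ)) = 1)
    (hAinv : ∀ k, IsUnit (A k).det)
    (hAdecay : ∀ k, ∀ i j, Tendsto (fun t : ℝ => (NormedSpace.exp (t • A k)) i j) atTop (nhds 0))
    (hAnn : ∀ k, ∀ t : ℝ, 0 ≤ t → ∀ i j, 0 ≤ (NormedSpace.exp (t • A k)) i j)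
    (hDnn : ∀ k, ∀ i j, 0 ≤ D k i j)
    (hD : ∀ k, D k *ᵥ (fun _ => (1 : ℝ)) = -(A k *ᵥ (fun _ => (1 : ℝ))))
    (k ℓ : Fin (n + 1)) (hkl : k < ℓ) :
    (∫ y in Set.univ.pi (fun _ : Fin (n + 1) => Set.Ioi (0 : ℝ)),
        y k * y ℓ *
          ((chainRow d (fun m => NormedSpace.exp (y m • A m) * D m) α (Fin.last (n + 1))) ⬝ᵥ
            (fun _ => (1 : ℝ))))
      - (∫ y in Set.univ.pi (fun _ : Fin (n + 1) => Set.Ioi (0 : ℝ)),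
          y k *
            ((chainRow d (fun m => NormedSpace.exp (y m • A m) * D m) α (Fin.last (n + 1))) ⬝ᵥ
              (fun _ => (1 : ℝ)))) *
        (∫ y in Set.univ.pi (fun _ : Fin (n + 1) => Set.Ioi (0 : ℝ)),
          y ℓ *
            ((chainRow d (fun m => NormedSpace.exp (y m • A m) * D m) α (Fin.last (n + 1))) ⬝ᵥ
              (fun _ => (1 : ℝ))))
      = (chainRow d (fun m => ((-(A m))⁻¹) ^ (if m = k then 2 else 1) * D m) α ℓ.castSucc) ⬝ᵥ
          ((-(A ℓ))⁻¹ *ᵥ (fun _ => (1 : ℝ)))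
        - ((chainRow d (fun m => (-(A m))⁻¹ * D m) α k.castSucc) ⬝ᵥ
            ((-(A k))⁻¹ *ᵥ (fun _ => (1 : ℝ)))) *
          ((chainRow d (fun m => (-(A m))⁻¹ * D m) α ℓ.castSucc) ⬝ᵥ
            ((-(A ℓ))⁻¹ *ᵥ (fun _ => (1 : ℝ)))) :=
  stmt_6_general n d A D α hAinv hAdecay hD k ℓ hkl
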